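/- Let {Y_i, 1 ≤ i ≤ n} be independent Bernoulli random variables with P(Y_i = 1) = 1/(b+i), b ≥ 0, and T_2(n) = ∑_{k=1}^{n-2} Y_k Y_{k+1}(1−Y_{k+2}). Then for n > 2, E(T_2(n)) = (1/2)·[ (3+2b)/((1+b)(2+b)) − (2n+2b−1)/((n+b−1)(n+b)) ]. -/

import Mathlib

/-!
By independence, the `k`-th summand has expectation
`p_k p_{k+1} (1 - p_{k+2})` with `p_i = 1/(b+i)`, and this equals
`1/((b+k)(b+k+2)) = (1/2)(1/(b+k) - 1/(b+k+2))`.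
The sum over `k` then telescopes with step two.
-/

open MeasureTheory ProbabilityTheory

theorem Finset.sum_Icc_sub_shift_two {M : Type*} [AddCommGroup M] (f : ℕ → M) (m : ℕ) :
    ∑ k ∈ Finset.Icc 1 m, (f k - f (k + 2)) = f 1 + f 2 - f (m + 1) - f (m + 2) := by
  induction m with
  | zero => simp
  | succ m ih =>
    rw [Finset.sum_Icc_succ_top (by omega), ih]
    abel

section ZeroOne

variable {Ω : Type*} {m0 : MeasurableSpace Ω} {μ : Measure Ω} {f : Ω → ℝ}

theorem integral_eq_measureReal_of_zero_or_one (hf : Measurable f)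
    (h01 : ∀ ω, f ω = 0 ∨ f ω = 1) : ∫ ω, f ω ∂μ = μ.real {ω | f ω = 1} := by
  rw [← integral_indicator_one (s := {ω | f ω = 1}) (hf (measurableSet_singleton 1))]
  congr 1 with ω
  rcases h01 ω with h | h <;> simp [h]

theorem integrable_of_zero_or_one [IsFiniteMeasure μ] (hf : Measurable f)
    (h01 : ∀ ω, f ω = 0 ∨ f ω = 1) : Integrable f μ :=
  .of_bound hf.aestronglyMeasurable 1 <| .of_forall fun ω => by
    rcases h01 ω with h | h <;> simp [h]

end ZeroOne

theorem ProbabilityTheory.iIndepFun.integral_mul_mul_one_sub {Ω : Type*} {m0 : MeasurableSpace Ω}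
    {μ : Measure Ω} [IsProbabilityMeasure μ] {Y : ℕ → Ω → ℝ} (hindep : iIndepFun Y μ)
    (hmeas : ∀ i, Measurable (Y i)) {i j k : ℕ} (hij : i ≠ j) (hik : i ≠ k) (hjk : j ≠ k)
    (hk : Integrable (Y k) μ) :
    ∫ ω, Y i ω * Y j ω * (1 - Y k ω) ∂μ
      = (∫ ω, Y i ω ∂μ) * (∫ ω, Y j ω ∂μ) * (1 - ∫ ω, Y k ω ∂μ) := by
  have h_ij_k : (fun ω => Y i ω * Y j ω) ⟂ᵢ[μ] fun ω => 1 - Y k ω :=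
    (hindep.indepFun_mul_left hmeas i j k hik hjk).comp measurable_id
      (measurable_const.sub measurable_id)
  rw [h_ij_k.integral_fun_mul_eq_mul_integral ((hmeas i).mul (hmeas j)).aestronglyMeasurable
      (measurable_const.sub (hmeas k)).aestronglyMeasurable,
    (hindep.indepFun hij).integral_fun_mul_eq_mul_integral (hmeas i).aestronglyMeasurable
      (hmeas j).aestronglyMeasurable,
    integral_sub (integrable_const 1) hk]
  simp

theorem sum_Icc_half_mul_one_div_sub_one_div {b : ℝ} (hb : 0 ≤ b) {n : ℕ} (hn : 2 < n) :
    ∑ k ∈ Finset.Icc 1 (n - 2), 1 / 2 * (1 / (b + k) - 1 / (b + (k + 2 : ℕ)))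
      = 1 / 2 * ((3 + 2 * b) / ((1 + b) * (2 + b))
          - (2 * n + 2 * b - 1) / (((n : ℝ) + b - 1) * ((n : ℝ) + b))) := by
  rw [← Finset.mul_sum, Finset.sum_Icc_sub_shift_two (fun i : ℕ => 1 / (b + i))]
  obtain ⟨m, rfl⟩ : ∃ m, n = m + 3 := ⟨n - 3, by omega⟩
  simp only [show m + 3 - 2 = m + 1 by omega]
  push_cast
  have hm : (0 : ℝ) < m + 3 + b - 1 := by linarith [m.cast_nonneg (α := ℝ)]
  field_simp
  ring

section BernoulliSequence

variable {Ω : Type*} {m0 : MeasurableSpace Ω} {μ : Measure Ω} [IsProbabilityMeasure μ]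
  {Y : ℕ → Ω → ℝ} {b : ℝ}

theorem integrable_mul_mul_one_sub_of_zero_or_one (hmeas : ∀ i, Measurable (Y i))
    (h01 : ∀ i ω, Y i ω = 0 ∨ Y i ω = 1) (i j k : ℕ) :
    Integrable (fun ω => Y i ω * Y j ω * (1 - Y k ω)) μ :=
  integrable_of_zero_or_one (((hmeas i).mul (hmeas j)).mul (measurable_const.sub (hmeas k)))
    fun ω => by
      rcases h01 i ω with h | h <;> rcases h01 j ω with h' | h' <;>
        rcases h01 k ω with h'' | h'' <;> simp [h, h', h'']

theorem integral_mul_mul_one_sub_of_bernoulli (hb : 0 ≤ b) (hmeas : ∀ i, Measurable (Y i))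
    (h01 : ∀ i ω, Y i ω = 0 ∨ Y i ω = 1) (hindep : iIndepFun Y μ)
    (hbern : ∀ i : ℕ, 1 ≤ i → μ {ω | Y i ω = 1} = ENNReal.ofReal (1 / (b + i)))
    {k : ℕ} (hk : 1 ≤ k) :
    ∫ ω, Y k ω * Y (k + 1) ω * (1 - Y (k + 2) ω) ∂μ
      = 1 / 2 * (1 / (b + k) - 1 / (b + (k + 2 : ℕ))) := by
  have hpos (i : ℕ) (hi : 1 ≤ i) : 0 < b + i := by
    have : (1 : ℝ) ≤ i := by exact_mod_cast hi
    linarith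
  have hmean (i : ℕ) (hi : 1 ≤ i) : ∫ ω, Y i ω ∂μ = 1 / (b + i) := by
    rw [integral_eq_measureReal_of_zero_or_one (hmeas i) (h01 i), measureReal_def, hbern i hi,
      ENNReal.toReal_ofReal (one_div_pos.mpr (hpos i hi)).le]
  rw [hindep.integral_mul_mul_one_sub hmeas (by omega) (by omega) (by omega)
      (integrable_of_zero_or_one (hmeas _) (h01 _)),
    hmean k hk, hmean (k + 1) (by omega), hmean (k + 2) (by omega)]
  have := hpos k hk
  push_cast
  field_simp
  ring

end BernoulliSequence

/-- For independent Bernoulli trials with `P(Y i = 1) = 1/(b+i)` (`b ≥ 0`), the expected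
number of tails of dependence cycles of length at least 2,
`T₂(n) = ∑_{k=1}^{n-2} Y_k Y_{k+1} (1 - Y_{k+2})`, satisfies, for `n > 2`,
`E(T₂(n)) = (1/2)((3+2b)/((1+b)(2+b)) - (2n+2b-1)/((n+b-1)(n+b)))`. -/
theorem stmt11 {Ω : Type*} {m0 : MeasurableSpace Ω} (μ : Measure Ω) [IsProbabilityMeasure μ]
    (Y : ℕ → Ω → ℝ) (b : ℝ) (hb : 0 ≤ b)
    (hmeas : ∀ i, Measurable (Y i))
    (h01 : ∀ i ω, Y i ω = 0 ∨ Y i ω = 1)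
    (hindep : iIndepFun Y μ)
    (hbern : ∀ i : ℕ, 1 ≤ i → μ {ω | Y i ω = 1} = ENNReal.ofReal (1 / (b + i)))
    (n : ℕ) (hn : 2 < n) :
    ∫ ω, (∑ k ∈ Finset.Icc 1 (n - 2), Y k ω * Y (k + 1) ω * (1 - Y (k + 2) ω)) ∂μ
      = (1 / 2) * ((3 + 2 * b) / ((1 + b) * (2 + b))
          - (2 * n + 2 * b - 1) / (((n : ℝ) + b - 1) * ((n : ℝ) + b))) := by
  rw [integral_finsetSum _ fun k _ => integrable_mul_mul_one_sub_of_zero_or_one hmeas h01 _ _ _,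
    Finset.sum_congr rfl fun k hk =>
      integral_mul_mul_one_sub_of_bernoulli hb hmeas h01 hindep hbern (Finset.mem_Icc.mp hk).1]
  exact sum_Icc_half_mul_one_div_sub_one_div hb hn
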